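/- For every graph G with n vertices and μ maximal cliques, μ/(2n) − 1 ≤ b_H(G) ≤ μ − 1, where b_H(G) is the Helly bend number of G. -/

import Mathlib

/-- A grid edge: a lattice point together with a direction; `true` means the
horizontal edge from `pt` to `pt + (1,0)`, `false` the vertical edge from `pt`
to `pt + (0,1)`. -/
structure GridEdge where
  pt : ℤ × ℤ
  horiz : Bool
deriving DecidableEq

/-- The two endpoints of a grid edge. -/
def GridEdge.endpoints (e : GridEdge) : Finset (ℤ × ℤ) :=
  {e.pt, if e.horiz then (e.pt.1 + 1, e.pt.2) else (e.pt.1, e.pt.2 + 1)}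

/-- Two distinct grid edges are adjacent when they share an endpoint. -/
def GridEdge.adj (e f : GridEdge) : Prop :=
  e ≠ f ∧ (e.endpoints ∩ f.endpoints).Nonempty

/-- A simple path in the integer grid, given by its sequence of edges:
consecutive edges are adjacent, all edges are distinct, and
non-consecutive edges are non-adjacent. -/
structure GridPath where
  edges : List GridEdge
  nonempty : edges ≠ []
  nodup : edges.Nodup
  chain : edges.Chain' GridEdge.adj
  simple : ∀ i j : ℕ, i + 1 < j → ∀ (hi : i < edges.length) (hj : j < edges.length),
    ¬ GridEdge.adj (edges.get ⟨i, hi⟩) (edges.get ⟨j, hj⟩)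

/-- The number of bends of a grid path: consecutive pairs of edges with
different directions. -/
def GridPath.bends (P : GridPath) : ℕ :=
  ((P.edges.zip P.edges.tail).filter fun q => q.1.horiz != q.2.horiz).length

/-- Two paths (edge-)intersect when they share a grid edge. -/
def GridPath.Inter (P Q : GridPath) : Prop :=
  ∃ e : GridEdge, e ∈ P.edges ∧ e ∈ Q.edges

/-- A relevant edge of a path: an extremity (first or last) edge or a bend edge. -/
def GridPath.IsRelevant (P : GridPath) (e : GridEdge) : Prop :=
  P.edges.head? = some e ∨ P.edges.getLast? = some e ∨
    ∃ q ∈ P.edges.zip P.edges.tail, q.1.horiz ≠ q.2.horiz ∧ (e = q.1 ∨ e = q.2)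

/-- An EPG representation of a graph: vertices are assigned grid paths, and two
distinct vertices are adjacent iff their paths share a grid edge. -/
def IsEPGRep {V : Type*} (G : SimpleGraph V) (P : V → GridPath) : Prop :=
  ∀ u v : V, u ≠ v → (G.Adj u v ↔ (P u).Inter (P v))

/-- The Helly property for a family of grid paths: every pairwise
edge-intersecting subfamily has a grid edge common to all its members. -/
def HellyEPG {ι : Type*} (P : ι → GridPath) : Prop :=
  ∀ T : Set ι, (∀ i ∈ T, ∀ j ∈ T, (P i).Inter (P j)) →
    ∃ e : GridEdge, ∀ i ∈ T, e ∈ (P i).edges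

/-- The set of maximal cliques of a graph. -/
def maxCliques {V : Type*} (G : SimpleGraph V) : Set (Set V) :=
  {s | G.IsClique s ∧ ∀ t : Set V, G.IsClique t → s ⊆ t → s = t}

/-- The Helly bend number of a graph: the least `k` such that the graph has a
Helly `B_k`-EPG representation. -/
noncomputable def hellyBendNumber {V : Type*} (G : SimpleGraph V) : ℕ :=
  sInf {k : ℕ | ∃ P : V → GridPath,
    IsEPGRep G P ∧ (∀ v : V, (P v).bends ≤ k) ∧ HellyEPG P}

namespace HB

/-- Staircase parameter of an edge. -/
def s (e : GridEdge) : ℤ := e.pt.1 - e.pt.2 + (if e.horiz then 1 else 0)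

def succ (e : GridEdge) : GridEdge :=
  ⟨if e.horiz then (e.pt.1 + 1, e.pt.2) else (e.pt.1, e.pt.2 + 1), e.horiz⟩

lemma mem_endpoints {e : GridEdge} {p : ℤ × ℤ} :
    p ∈ e.endpoints ↔ p = e.pt ∨
      p = (if e.horiz then (e.pt.1 + 1, e.pt.2) else (e.pt.1, e.pt.2 + 1)) := by
  simp [GridEdge.endpoints]

lemma adj_s {e f : GridEdge} (h : GridEdge.adj e f) : s e ≤ s f + 1 ∧ s f ≤ s e + 1 := by
  obtain ⟨hne, p, hp⟩ := h
  obtain ⟨hp1, hp2⟩ := Finset.mem_inter.mp hp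
  rw [mem_endpoints] at hp1 hp2
  obtain ⟨⟨ex, ey⟩, eh⟩ := e
  obtain ⟨⟨fx, fy⟩, fh⟩ := f
  obtain ⟨px, py⟩ := p
  unfold s
  cases eh <;> cases fh <;> simp only [Prod.mk.injEq, Bool.false_eq_true, if_true, if_false,
    ite_true, ite_false] at hp1 hp2 ⊢ <;> omega

lemma succ_horiz (e : GridEdge) : (succ e).horiz = e.horiz := rfl

lemma succ_inj : Function.Injective succ := by
  intro e f h
  obtain ⟨⟨ex, ey⟩, eh⟩ := e
  obtain ⟨⟨fx, fy⟩, fh⟩ := f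
  have hh : eh = fh := congrArg GridEdge.horiz h
  subst hh
  cases eh <;> simp [succ] at h ⊢ <;> omega

lemma adj_same_dir {e f : GridEdge} (h : GridEdge.adj e f) (hh : e.horiz = f.horiz) :
    f = succ e ∨ e = succ f := by
  obtain ⟨hne, p, hp⟩ := h
  obtain ⟨hp1, hp2⟩ := Finset.mem_inter.mp hp
  rw [mem_endpoints] at hp1 hp2
  obtain ⟨⟨ex, ey⟩, eh⟩ := e
  obtain ⟨⟨fx, fy⟩, fh⟩ := f
  obtain ⟨px, py⟩ := p
  simp only at hh
  subst hh
  have hne' : ¬ (ex = fx ∧ ey = fy) := by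
    intro ⟨h1, h2⟩; exact hne (by simp [h1, h2])
  cases eh <;>
    simp only [succ, Prod.mk.injEq, Bool.false_eq_true, ite_true, ite_false,
      GridEdge.mk.injEq, and_true, true_and] at hp1 hp2 ⊢ <;> omega

end HB
namespace HB

/-- Bend count of a list of edges. -/
def B (l : List GridEdge) : ℕ :=
  ((l.zip l.tail).filter fun q => q.1.horiz != q.2.horiz).length

lemma B_nil : B [] = 0 := rfl

lemma B_single (e : GridEdge) : B [e] = 0 := rfl

lemma B_cons_cons (x y : GridEdge) (l : List GridEdge) :
    B (x :: y :: l) = (if x.horiz != y.horiz then 1 else 0) + B (y :: l) := by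
  simp only [B, List.zip_cons_cons, List.tail_cons, List.filter_cons]
  split <;> simp [Nat.add_comm]

lemma B_eq_zero {l : List GridEdge} (b : Bool) (h : ∀ e ∈ l, e.horiz = b) : B l = 0 := by
  induction l with
  | nil => rfl
  | cons x t ih =>
    cases t with
    | nil => rfl
    | cons y u =>
      rw [B_cons_cons]
      have hx : x.horiz = b := h x (by simp)
      have hy : y.horiz = b := h y (by simp)
      rw [ih (fun e he => h e (List.mem_cons_of_mem _ he))]
      simp [hx, hy]

lemma B_append_le (l1 l2 : List GridEdge) : B (l1 ++ l2) ≤ B l1 + B l2 + 1 := by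
  induction l1 with
  | nil => simpa [B_nil] using Nat.le_succ _
  | cons x t ih =>
    cases t with
    | nil =>
      cases l2 with
      | nil => simp [B_single]
      | cons y u =>
        rw [List.singleton_append, B_cons_cons, B_single]
        split <;> omega
    | cons y t' =>
      rw [List.cons_append, List.cons_append, B_cons_cons, B_cons_cons]
      rw [List.cons_append] at ih
      omega

lemma B_flatten_lt (L : List (List GridEdge)) (hne : L ≠ [])
    (h : ∀ l ∈ L, B l = 0) : B L.flatten < L.length := by
  induction L with
  | nil => exact absurd rfl hne
  | cons l L' ih =>
    cases L' with
    | nil =>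
      have h0 : B l = 0 := h l (by simp)
      simp [h0]
    | cons l2 L'' =>
      have h2 := ih (by simp) (fun x hx => h x (List.mem_cons_of_mem _ hx))
      have h3 := B_append_le l (l2 :: L'').flatten
      rw [List.flatten_cons]
      have h0 : B l = 0 := h l (by simp)
      simp only [List.length_cons] at h2 ⊢
      omega

/-- The chaining relation for building staircase paths. -/
def Rel (e f : GridEdge) : Prop := GridEdge.adj e f ∧ s f = s e + 1

lemma s_get {l : List GridEdge} (h : l.Chain' Rel) :
    ∀ i (hi : i < l.length), s (l.get ⟨i, hi⟩) = s (l.get ⟨0, by omega⟩) + i := by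
  intro i
  induction i with
  | zero => intro hi; simp
  | succ n ihn =>
    intro hi
    have hn : n < l.length := by omega
    have hrel : Rel (l.get ⟨n, hn⟩) (l.get ⟨n + 1, hi⟩) := List.isChain_iff_getElem.mp h n (by omega)
    rw [hrel.2, ihn hn]
    push_cast
    ring

/-- Build a `GridPath` from a chained staircase list. -/
def mkPath (l : List GridEdge) (h1 : l ≠ []) (h2 : l.Chain' Rel) : GridPath where
  edges := l
  nonempty := h1
  nodup := by
    rw [List.nodup_iff_injective_get]
    intro i j hij
    have hi := s_get h2 i.1 i.2
    have hj := s_get h2 j.1 j.2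
    have hs : s (l.get ⟨i.1, i.2⟩) = s (l.get ⟨j.1, j.2⟩) := by
      rw [Fin.eta, Fin.eta, hij]
    apply Fin.ext
    omega
  chain := h2.imp (fun _ _ hr => hr.1)
  simple := by
    intro i j hij hi hj hadj
    have h1' := s_get h2 i hi
    have h2' := s_get h2 j hj
    have := adj_s hadj
    omega

end HB
namespace HB

def emitH (c : ℤ × ℤ) (len : ℕ) : List GridEdge :=
  (List.range len).map fun k : ℕ => ⟨(c.1 + (k : ℤ), c.2), true⟩

def emitV (c : ℤ × ℤ) (len : ℕ) : List GridEdge :=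
  (List.range len).map fun k : ℕ => ⟨(c.1, c.2 - 1 - (k : ℤ)), false⟩

lemma length_emitH (c : ℤ × ℤ) (len : ℕ) : (emitH c len).length = len := by
  simp [emitH]

lemma length_emitV (c : ℤ × ℤ) (len : ℕ) : (emitV c len).length = len := by
  simp [emitV]

def down (e : GridEdge) : GridEdge := ⟨(e.pt.1, e.pt.2 - 1), e.horiz⟩

lemma adj_succ (e : GridEdge) : GridEdge.adj e (succ e) := by
  constructor
  · obtain ⟨⟨x, y⟩, h⟩ := e
    cases h <;> simp [succ] <;> omega
  · refine ⟨if e.horiz then (e.pt.1 + 1, e.pt.2) else (e.pt.1, e.pt.2 + 1), ?_⟩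
    rw [Finset.mem_inter, mem_endpoints, mem_endpoints]
    exact ⟨Or.inr rfl, Or.inl rfl⟩

lemma rel_succ {e f : GridEdge} (hh : e.horiz = true) (hf : f = succ e) : Rel e f := by
  subst hf
  refine ⟨adj_succ e, ?_⟩
  obtain ⟨⟨x, y⟩, h⟩ := e
  simp only at hh
  subst hh
  simp [s, succ]
  ring

lemma rel_down {e f : GridEdge} (hh : e.horiz = false) (hf : f = down e) : Rel e f := by
  subst hf
  obtain ⟨⟨x, y⟩, h⟩ := e
  simp only at hh
  subst hh
  refine ⟨⟨?_, ⟨(x, y), ?_⟩⟩, ?_⟩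
  · simp [down]
    omega
  · rw [Finset.mem_inter, mem_endpoints, mem_endpoints]
    refine ⟨Or.inl rfl, Or.inr ?_⟩
    simp [down]
  · simp [s, down]
    ring

lemma chain'_map_range {f : ℕ → GridEdge} {len : ℕ}
    (hs : ∀ k : ℕ, k + 1 < len → Rel (f k) (f (k + 1))) :
    ((List.range len).map f).Chain' Rel := by
  apply List.isChain_iff_getElem.mpr
  intro i hi
  simp only [List.length_map, List.length_range] at hi
  simp only [List.getElem_map, List.getElem_range]
  exact hs i (by omega)

lemma chain_emitH (c : ℤ × ℤ) (len : ℕ) : (emitH c len).Chain' Rel := by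
  apply chain'_map_range
  intro k _
  apply rel_succ rfl
  simp only [succ, GridEdge.mk.injEq, Prod.mk.injEq, ite_true]
  refine ⟨⟨?_, trivial⟩, trivial⟩
  push_cast
  ring

lemma chain_emitV (c : ℤ × ℤ) (len : ℕ) : (emitV c len).Chain' Rel := by
  apply chain'_map_range
  intro k _
  apply rel_down rfl
  simp only [down, GridEdge.mk.injEq, Prod.mk.injEq]
  refine ⟨⟨trivial, ?_⟩, trivial⟩
  push_cast
  ring

lemma mem_emitH {e : GridEdge} {c : ℤ × ℤ} {len : ℕ} :
    e ∈ emitH c len ↔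
      e.horiz = true ∧ e.pt.2 = c.2 ∧ c.1 ≤ e.pt.1 ∧ e.pt.1 < c.1 + len := by
  obtain ⟨⟨ex, ey⟩, eh⟩ := e
  simp only [emitH, List.mem_map, List.mem_range, GridEdge.mk.injEq, Prod.mk.injEq]
  constructor
  · rintro ⟨k, hk, ⟨h1, h2⟩, h3⟩
    subst h1 h2 h3
    refine ⟨rfl, rfl, by omega, by omega⟩
  · rintro ⟨h1, h2, h3, h4⟩
    exact ⟨(ex - c.1).toNat, by omega, ⟨by omega, h2.symm⟩, h1.symm⟩

lemma mem_emitV {e : GridEdge} {c : ℤ × ℤ} {len : ℕ} :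
    e ∈ emitV c len ↔
      e.horiz = false ∧ e.pt.1 = c.1 ∧ c.2 - len ≤ e.pt.2 ∧ e.pt.2 < c.2 := by
  obtain ⟨⟨ex, ey⟩, eh⟩ := e
  simp only [emitV, List.mem_map, List.mem_range, GridEdge.mk.injEq, Prod.mk.injEq]
  constructor
  · rintro ⟨k, hk, ⟨h1, h2⟩, h3⟩
    subst h1 h2 h3
    refine ⟨rfl, rfl, by omega, by omega⟩
  · rintro ⟨h1, h2, h3, h4⟩
    exact ⟨(c.2 - 1 - ey).toNat, by omega, ⟨h2.symm, by omega⟩, h1.symm⟩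

lemma head?_emitH (c : ℤ × ℤ) {len : ℕ} (h : len ≠ 0) :
    (emitH c len).head? = some ⟨(c.1, c.2), true⟩ := by
  obtain ⟨m, rfl⟩ := Nat.exists_eq_succ_of_ne_zero h
  rw [emitH, List.range_succ_eq_map]
  simp

lemma head?_emitV (c : ℤ × ℤ) {len : ℕ} (h : len ≠ 0) :
    (emitV c len).head? = some ⟨(c.1, c.2 - 1), false⟩ := by
  obtain ⟨m, rfl⟩ := Nat.exists_eq_succ_of_ne_zero h
  rw [emitV, List.range_succ_eq_map]
  simp

lemma getLast?_emitH (c : ℤ × ℤ) {len : ℕ} (h : len ≠ 0) :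
    (emitH c len).getLast? = some ⟨(c.1 + len - 1, c.2), true⟩ := by
  obtain ⟨m, rfl⟩ := Nat.exists_eq_succ_of_ne_zero h
  rw [emitH, List.range_succ, List.map_append, List.map_cons, List.map_nil,
    List.getLast?_concat]
  simp only [Option.some.injEq, GridEdge.mk.injEq, Prod.mk.injEq]
  refine ⟨⟨?_, trivial⟩, trivial⟩
  push_cast
  ring

lemma getLast?_emitV (c : ℤ × ℤ) {len : ℕ} (h : len ≠ 0) :
    (emitV c len).getLast? = some ⟨(c.1, c.2 - len), false⟩ := by
  obtain ⟨m, rfl⟩ := Nat.exists_eq_succ_of_ne_zero h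
  rw [emitV, List.range_succ, List.map_append, List.map_cons, List.map_nil,
    List.getLast?_concat]
  simp only [Option.some.injEq, GridEdge.mk.injEq, Prod.mk.injEq]
  refine ⟨⟨trivial, ?_⟩, trivial⟩
  push_cast
  ring

lemma emitH_horiz {e : GridEdge} {c : ℤ × ℤ} {len : ℕ} (h : e ∈ emitH c len) :
    e.horiz = true := (mem_emitH.mp h).1

lemma emitV_horiz {e : GridEdge} {c : ℤ × ℤ} {len : ℕ} (h : e ∈ emitV c len) :
    e.horiz = false := (mem_emitV.mp h).1

lemma emitH_ne_nil (c : ℤ × ℤ) {len : ℕ} (h : len ≠ 0) : emitH c len ≠ [] := by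
  intro hc
  have := length_emitH c len
  rw [hc] at this
  simp at this
  omega

lemma emitV_ne_nil (c : ℤ × ℤ) {len : ℕ} (h : len ≠ 0) : emitV c len ≠ [] := by
  intro hc
  have := length_emitV c len
  rw [hc] at this
  simp at this
  omega

end HB
namespace HB

open scoped Classical

section Main

variable {V : Type*} [Fintype V] (G : SimpleGraph V)

local notation "μ" => Set.ncard (maxCliques G)
local notation "K" => (Fintype.card V + 1)

lemma exists_max_superset {s : Set V} (hs : G.IsClique s) :
    ∃ C ∈ maxCliques G, s ⊆ C := by
  classical
  obtain ⟨C, hC, hmax⟩ := Set.Finite.exists_maximalFor Set.ncard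
    {t : Set V | G.IsClique t ∧ s ⊆ t} (Set.toFinite _) ⟨s, hs, Set.Subset.rfl⟩
  refine ⟨C, ⟨hC.1, ?_⟩, hC.2⟩
  intro t ht hCt
  have htm : t ∈ {t : Set V | G.IsClique t ∧ s ⊆ t} := ⟨ht, hC.2.trans hCt⟩
  have h1 : C.ncard ≤ t.ncard := Set.ncard_le_ncard hCt (Set.toFinite t)
  have h2 := hmax htm h1
  exact Set.eq_of_subset_of_ncard_le hCt h2 (Set.toFinite t)

noncomputable def clqList : List (Set V) := (Set.toFinite (maxCliques G)).toFinset.toList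

lemma length_clqList : (clqList G).length = μ := by
  rw [clqList, Finset.length_toList, Set.ncard_eq_toFinset_card (maxCliques G)
    (Set.toFinite _)]

noncomputable def clq (m : ℕ) : Set V := (clqList G).getD m ∅

lemma clq_mem {m : ℕ} (h : m < μ) : clq G m ∈ maxCliques G := by
  rw [clq, List.getD_eq_getElem _ _ (by rw [length_clqList]; omega)]
  rw [← Set.Finite.mem_toFinset (Set.toFinite (maxCliques G)), ← Finset.mem_toList]
  exact List.getElem_mem _

lemma clq_surj {C : Set V} (h : C ∈ maxCliques G) : ∃ m, m < μ ∧ clq G m = C := by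
  have : C ∈ clqList G := by
    rw [clqList, Finset.mem_toList, Set.Finite.mem_toFinset]; exact h
  obtain ⟨i, hi⟩ := List.mem_iff_get.mp this
  refine ⟨i.1, lt_of_lt_of_eq i.2 (length_clqList G), ?_⟩
  rw [clq, List.getD_eq_getElem _ _ i.2]
  simpa [List.get_eq_getElem] using hi

lemma clq_inj {m1 m2 : ℕ} (h1 : m1 < μ) (h2 : m2 < μ) (h : clq G m1 = clq G m2) :
    m1 = m2 := by
  have hnd : (clqList G).Nodup := Finset.nodup_toList _
  have hl1 : m1 < (clqList G).length := by rw [length_clqList]; omega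
  have hl2 : m2 < (clqList G).length := by rw [length_clqList]; omega
  rw [clq, clq, List.getD_eq_getElem _ _ hl1, List.getD_eq_getElem _ _ hl2] at h
  have := List.nodup_iff_injective_get.mp hnd
    (show (clqList G).get ⟨m1, hl1⟩ = (clqList G).get ⟨m2, hl2⟩ by simpa using h)
  simpa using congrArg Fin.val this

noncomputable def dd (v : V) : ℕ := (Fintype.equivFin V v).val + 1

lemma dd_pos (v : V) : 1 ≤ dd v := Nat.le_add_left 1 _

lemma dd_le (v : V) : dd v ≤ Fintype.card V := (Fintype.equivFin V v).2

lemma dd_inj {u w : V} (h : dd u = dd w) : u = w := by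
  have : (Fintype.equivFin V) u = (Fintype.equivFin V) w := by
    apply Fin.ext
    simpa [dd] using h
  exact (Fintype.equivFin V).injective this

noncomputable def Sv (v : V) : Finset ℕ :=
  (Finset.range μ).filter (fun m => v ∈ clq G m)

lemma mem_Sv {v : V} {m : ℕ} : m ∈ Sv G v ↔ m < μ ∧ v ∈ clq G m := by
  simp [Sv]

lemma Sv_nonempty (v : V) : (Sv G v).Nonempty := by
  obtain ⟨C, hC, hsub⟩ := exists_max_superset G (G.isClique_singleton v)
  obtain ⟨m, hm, rfl⟩ := clq_surj G hC
  exact ⟨m, (mem_Sv G).mpr ⟨hm, hsub rfl⟩⟩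

noncomputable def av (v : V) : ℕ := (Sv G v).min' (Sv_nonempty G v)
noncomputable def bv (v : V) : ℕ := (Sv G v).max' (Sv_nonempty G v)

lemma av_mem (v : V) : av G v ∈ Sv G v := Finset.min'_mem _ _
lemma bv_mem (v : V) : bv G v ∈ Sv G v := Finset.max'_mem _ _
lemma av_le {v : V} {m : ℕ} (h : m ∈ Sv G v) : av G v ≤ m := Finset.min'_le _ _ h
lemma le_bv {v : V} {m : ℕ} (h : m ∈ Sv G v) : m ≤ bv G v := Finset.le_max' _ _ h
lemma av_le_bv (v : V) : av G v ≤ bv G v := av_le G (bv_mem G v)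
lemma bv_lt_mu (v : V) : bv G v < μ := ((mem_Sv G).mp (bv_mem G v)).1

noncomputable def dl (v : V) (m : ℕ) : ℕ := if v ∈ clq G m then 0 else dd v

lemma dl_lt (v : V) (m : ℕ) : dl G v m < K := by
  rw [dl]
  split
  · omega
  · have := dd_le v; omega

lemma dl_eq_zero_iff {v : V} {m : ℕ} : dl G v m = 0 ↔ v ∈ clq G m := by
  rw [dl]
  split <;> simp_all
  have := dd_pos v; omega

noncomputable def coord (v : V) (m : ℕ) : ℕ := K * m + dl G v m

lemma coord_lb (v : V) (m : ℕ) : K * m ≤ coord G v m := Nat.le_add_right _ _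

lemma coord_ub (v : V) (m : ℕ) : coord G v m < K * (m + 1) := by
  have := dl_lt G v m
  rw [coord, Nat.mul_succ]
  omega

lemma coord_inj {u w : V} {m1 m2 : ℕ} (h : coord G u m1 = coord G w m2) :
    m1 = m2 ∧ dl G u m1 = dl G w m2 := by
  have h1 := dl_lt G u m1
  have h2 := dl_lt G w m2
  rw [coord, coord] at h
  have hm : m1 = m2 := by
    have e1 : (K * m1 + dl G u m1) / K = m1 := by
      rw [Nat.mul_add_div (by omega), Nat.div_eq_of_lt h1]; omega
    have e2 : (K * m2 + dl G w m2) / K = m2 := by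
      rw [Nat.mul_add_div (by omega), Nat.div_eq_of_lt h2]; omega
    rw [← e1, ← e2, h]
  refine ⟨hm, ?_⟩
  subst hm
  omega

lemma coord_mul_pred {v : V} {m : ℕ} (hm : 1 ≤ m) : coord G v (m - 1) < K * m := by
  have := coord_ub G v (m - 1)
  have h1 : m - 1 + 1 = m := by omega
  rwa [h1] at this

/-! Segment geometry. -/

noncomputable def xin (v : V) (m : ℕ) : ℤ :=
  if m = av G v then ((K * m : ℕ) : ℤ) else ((coord G v (m - 1) : ℕ) : ℤ)

noncomputable def xout (v : V) (m : ℕ) : ℤ :=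
  if m = bv G v then ((K * m : ℕ) : ℤ) + 1 else ((coord G v (m + 1) : ℕ) : ℤ)

noncomputable def yin (v : V) (m : ℕ) : ℤ :=
  if m = av G v then -((K * m : ℕ) : ℤ) + 1 else -((coord G v (m - 1) : ℕ) : ℤ)

noncomputable def yout (v : V) (m : ℕ) : ℤ :=
  if m = bv G v then -((K * m : ℕ) : ℤ) else -((coord G v (m + 1) : ℕ) : ℤ)

noncomputable def seg (v : V) (m : ℕ) : List GridEdge :=
  if m % 2 = 0 then
    emitH (xin G v m, -((coord G v m : ℕ) : ℤ)) (xout G v m - xin G v m).toNat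
  else
    emitV (((coord G v m : ℕ) : ℤ), yin G v m) (yin G v m - yout G v m).toNat

lemma xin_le {v : V} {m : ℕ} (hm : av G v ≤ m) : xin G v m ≤ ((K * m : ℕ) : ℤ) := by
  rw [xin]
  split
  · omega
  · have hm1 : 1 ≤ m := by omega
    have := coord_mul_pred G (v := v) hm1
    exact_mod_cast le_of_lt this

lemma lt_xout {v : V} {m : ℕ} : ((K * m : ℕ) : ℤ) < xout G v m := by
  rw [xout]
  split
  · omega
  · have h1 := coord_lb G v (m + 1)
    have h2 : K * m < K * (m + 1) := by rw [Nat.mul_succ]; omega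
    have : K * m < coord G v (m + 1) := by omega
    exact_mod_cast this

lemma le_yin {v : V} {m : ℕ} (hm : av G v ≤ m) : -((K * m : ℕ) : ℤ) + 1 ≤ yin G v m := by
  rw [yin]
  split
  · omega
  · have hm1 : 1 ≤ m := by omega
    have := coord_mul_pred G (v := v) hm1
    have : (coord G v (m - 1) : ℤ) < ((K * m : ℕ) : ℤ) := by exact_mod_cast this
    omega

lemma yout_le {v : V} {m : ℕ} : yout G v m ≤ -((K * m : ℕ) : ℤ) := by
  rw [yout]
  split
  · omega
  · have h1 := coord_lb G v (m + 1)
    have h2 : K * m < K * (m + 1) := by rw [Nat.mul_succ]; omega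
    have : K * m ≤ coord G v (m + 1) := by omega
    have : ((K * m : ℕ) : ℤ) ≤ (coord G v (m + 1) : ℤ) := by exact_mod_cast this
    omega

lemma xin_lt_xout {v : V} {m : ℕ} (hm : av G v ≤ m) : xin G v m < xout G v m :=
  lt_of_le_of_lt (xin_le G hm) (lt_xout G)

lemma yout_lt_yin {v : V} {m : ℕ} (hm : av G v ≤ m) : yout G v m < yin G v m :=
  lt_of_le_of_lt (yout_le G) (by have := le_yin G hm; omega)

lemma seg_ne_nil {v : V} {m : ℕ} (hm : av G v ≤ m) : seg G v m ≠ [] := by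
  rw [seg]
  split
  · exact emitH_ne_nil _ (by have := xin_lt_xout G hm; omega)
  · exact emitV_ne_nil _ (by have := yout_lt_yin G hm; omega)

lemma chain_seg (v : V) (m : ℕ) : (seg G v m).Chain' Rel := by
  rw [seg]; split
  · exact chain_emitH _ _
  · exact chain_emitV _ _

end Main

end HB
namespace HB

open scoped Classical

section Main2

variable {V : Type*} [Fintype V] (G : SimpleGraph V)

local notation "μ" => Set.ncard (maxCliques G)
local notation "K" => (Fintype.card V + 1)

lemma getLast?_seg_even {v : V} {m : ℕ} (h2 : m % 2 = 0) (ha : av G v ≤ m) :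
    (seg G v m).getLast? = some ⟨(xout G v m - 1, -((coord G v m : ℕ) : ℤ)), true⟩ := by
  have hlt := xin_lt_xout G ha
  rw [seg, if_pos h2, getLast?_emitH _ (by omega)]
  simp only [Option.some.injEq, GridEdge.mk.injEq, Prod.mk.injEq]
  refine ⟨⟨?_, trivial⟩, trivial⟩
  omega

lemma head?_seg_even {v : V} {m : ℕ} (h2 : m % 2 = 0) (ha : av G v ≤ m) :
    (seg G v m).head? = some ⟨(xin G v m, -((coord G v m : ℕ) : ℤ)), true⟩ := by
  have hlt := xin_lt_xout G ha
  rw [seg, if_pos h2, head?_emitH _ (by omega)]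

lemma getLast?_seg_odd {v : V} {m : ℕ} (h2 : ¬ m % 2 = 0) (ha : av G v ≤ m) :
    (seg G v m).getLast? = some ⟨(((coord G v m : ℕ) : ℤ), yout G v m), false⟩ := by
  have hlt := yout_lt_yin G ha
  rw [seg, if_neg h2, getLast?_emitV _ (by omega)]
  simp only [Option.some.injEq, GridEdge.mk.injEq, Prod.mk.injEq]
  refine ⟨⟨trivial, ?_⟩, trivial⟩
  omega

lemma head?_seg_odd {v : V} {m : ℕ} (h2 : ¬ m % 2 = 0) (ha : av G v ≤ m) :
    (seg G v m).head? = some ⟨(((coord G v m : ℕ) : ℤ), yin G v m - 1), false⟩ := by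
  have hlt := yout_lt_yin G ha
  rw [seg, if_neg h2, head?_emitV _ (by omega)]

lemma glue {v : V} {m : ℕ} (ha : av G v ≤ m) (hb : m < bv G v) :
    ∀ x ∈ (seg G v m).getLast?, ∀ y ∈ (seg G v (m + 1)).head?, Rel x y := by
  intro x hx y hy
  have hmb : m ≠ bv G v := by omega
  have hma : m + 1 ≠ av G v := by omega
  have ham : av G v ≤ m + 1 := by omega
  have hsub : m + 1 - 1 = m := by omega
  by_cases h2 : m % 2 = 0
  · have h2' : ¬ (m + 1) % 2 = 0 := by omega
    rw [getLast?_seg_even G h2 ha, Option.mem_some_iff] at hx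
    rw [head?_seg_odd G h2' ham, Option.mem_some_iff] at hy
    subst hx hy
    have hxo : xout G v m = ((coord G v (m + 1) : ℕ) : ℤ) := by rw [xout, if_neg hmb]
    have hyi : yin G v (m + 1) = -((coord G v m : ℕ) : ℤ) := by
      rw [yin, if_neg hma, hsub]
    constructor
    · constructor
      · simp
      · refine ⟨(((coord G v (m + 1) : ℕ) : ℤ), -((coord G v m : ℕ) : ℤ)), ?_⟩
        rw [Finset.mem_inter, mem_endpoints, mem_endpoints]
        constructor
        · right
          simp [hxo]
        · right
          simp [hyi]
    · simp [s, hxo, hyi]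
      try ring
      try omega
  · have h2' : (m + 1) % 2 = 0 := by omega
    rw [getLast?_seg_odd G h2 ha, Option.mem_some_iff] at hx
    rw [head?_seg_even G h2' ham, Option.mem_some_iff] at hy
    subst hx hy
    have hyo : yout G v m = -((coord G v (m + 1) : ℕ) : ℤ) := by rw [yout, if_neg hmb]
    have hxi : xin G v (m + 1) = ((coord G v m : ℕ) : ℤ) := by
      rw [xin, if_neg hma, hsub]
    constructor
    · constructor
      · simp
      · refine ⟨(((coord G v m : ℕ) : ℤ), -((coord G v (m + 1) : ℕ) : ℤ)), ?_⟩
        rw [Finset.mem_inter, mem_endpoints, mem_endpoints]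
        constructor
        · left
          simp [hyo]
        · left
          simp [hxi]
    · simp [s, hyo, hxi]
      try ring
      try omega

noncomputable def pathEdges (v : V) : List GridEdge :=
  (List.range (bv G v - av G v + 1)).flatMap (fun p => seg G v (av G v + p))

lemma mem_pathEdges {v : V} {e : GridEdge} :
    e ∈ pathEdges G v ↔ ∃ m, av G v ≤ m ∧ m ≤ bv G v ∧ e ∈ seg G v m := by
  have hab := av_le_bv G v
  rw [pathEdges, List.mem_flatMap]
  constructor
  · rintro ⟨p, hp, he⟩
    rw [List.mem_range] at hp
    exact ⟨av G v + p, by omega, by omega, he⟩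
  · rintro ⟨m, h1, h2, he⟩
    refine ⟨m - av G v, by rw [List.mem_range]; omega, ?_⟩
    have : av G v + (m - av G v) = m := by omega
    rwa [this]

lemma chain_flat (v : V) : ∀ (q st : ℕ), av G v ≤ st → st + q = bv G v + 1 →
    ((List.range q).flatMap (fun p => seg G v (st + p))).Chain' Rel := by
  intro q
  induction q with
  | zero => intro st _ _; simp [List.Chain']
  | succ q ih =>
    intro st hst hq
    rw [List.range_succ_eq_map, List.flatMap_cons, List.flatMap_map]
    have hf : (fun a : ℕ => seg G v (st + a.succ)) = fun p => seg G v ((st + 1) + p) := by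
      funext p
      congr 1
      omega
    rw [hf]
    rw [List.Chain', List.isChain_append]
    refine ⟨by simpa [List.Chain'] using chain_seg G v st, ih (st + 1) (by omega) (by omega), ?_⟩
    intro x hx y hy
    rcases Nat.eq_zero_or_pos q with hq0 | hq0
    · subst hq0
      simp at hy
    · have hstb : st < bv G v := by omega
      have hy' : y ∈ (seg G v (st + 1)).head? := by
        obtain ⟨q', rfl⟩ := Nat.exists_eq_succ_of_ne_zero (by omega : q ≠ 0)
        rw [List.range_succ_eq_map, List.flatMap_cons] at hy
        have hne : seg G v (st + 1 + 0) ≠ [] := seg_ne_nil G (by omega)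
        rw [List.head?_append, List.head?_eq_head hne, Option.some_or] at hy
        rw [List.head?_eq_head (show seg G v (st + 1) ≠ [] from hne)]
        exact hy
      exact glue G hst hstb x (by simpa using hx) y hy'

end Main2

end HB
namespace HB

open scoped Classical

section Main3

variable {V : Type*} [Fintype V] (G : SimpleGraph V)

local notation "μ" => Set.ncard (maxCliques G)
local notation "K" => (Fintype.card V + 1)

noncomputable def EdG (G : SimpleGraph V) (m : ℕ) : GridEdge :=
  ⟨(((K * m : ℕ) : ℤ), -((K * m : ℕ) : ℤ)), decide (m % 2 = 0)⟩

lemma Ed_mem_seg {v : V} {m : ℕ} (h : m ∈ Sv G v) : EdG G m ∈ seg G v m := by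
  obtain ⟨hmu, hv⟩ := (mem_Sv G).mp h
  have ha : av G v ≤ m := av_le G h
  have hb : m ≤ bv G v := le_bv G h
  have hco : coord G v m = K * m := by
    rw [coord, (dl_eq_zero_iff G).mpr hv]
    omega
  have hxi := xin_le G (v := v) (m := m) ha
  have hxo := lt_xout G (v := v) (m := m)
  have hyi := le_yin G (v := v) (m := m) ha
  have hyo := yout_le G (v := v) (m := m)
  by_cases h2 : m % 2 = 0
  · rw [seg, if_pos h2]
    rw [mem_emitH]
    refine ⟨by simp [EdG, h2], ?_, ?_, ?_⟩
    · simp only [EdG, hco]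
    · simpa [EdG] using hxi
    · simp only [EdG]
      have hlen : ((xout G v m - xin G v m).toNat : ℤ) = xout G v m - xin G v m := by
        omega
      rw [hlen]
      omega
  · rw [seg, if_neg h2]
    rw [mem_emitV]
    refine ⟨by simp [EdG, h2], ?_, ?_, ?_⟩
    · simp only [EdG, hco]
    · simp only [EdG]
      have hlen : ((yin G v m - yout G v m).toNat : ℤ) = yin G v m - yout G v m := by
        omega
      rw [hlen]
      omega
    · simp only [EdG]
      omega

lemma chain_pathEdges (v : V) : (pathEdges G v).Chain' Rel :=
  chain_flat G v (bv G v - av G v + 1) (av G v) le_rfl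
    (by have := av_le_bv G v; omega)

lemma Ed_mem_pathEdges {v : V} {m : ℕ} (h : m ∈ Sv G v) : EdG G m ∈ pathEdges G v :=
  (mem_pathEdges G).mpr ⟨m, av_le G h, le_bv G h, Ed_mem_seg G h⟩

lemma pathEdges_ne_nil (v : V) : pathEdges G v ≠ [] :=
  List.ne_nil_of_mem (Ed_mem_pathEdges G (av_mem G v))

noncomputable def pathOf (v : V) : GridPath :=
  mkPath (pathEdges G v) (pathEdges_ne_nil G v) (chain_pathEdges G v)

lemma pathOf_edges (v : V) : (pathOf G v).edges = pathEdges G v := rfl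

lemma seg_B_zero (v : V) (m : ℕ) : B (seg G v m) = 0 := by
  rw [seg]
  split
  · exact B_eq_zero true (fun e he => emitH_horiz he)
  · exact B_eq_zero false (fun e he => emitV_horiz he)

lemma bends_pathOf_le (v : V) : (pathOf G v).bends + 1 ≤ μ := by
  have h1 : (pathOf G v).bends = B (pathEdges G v) := rfl
  have h2 : pathEdges G v =
      ((List.range (bv G v - av G v + 1)).map (fun p => seg G v (av G v + p))).flatten := by
    rw [pathEdges, List.flatMap_def]
  have h3 := B_flatten_lt
    ((List.range (bv G v - av G v + 1)).map (fun p => seg G v (av G v + p)))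
    (by simp) (by
      intro l hl
      rw [List.mem_map] at hl
      obtain ⟨p, -, rfl⟩ := hl
      exact seg_B_zero G v _)
  rw [h1, h2]
  have h4 : ((List.range (bv G v - av G v + 1)).map
      (fun p => seg G v (av G v + p))).length = bv G v - av G v + 1 := by simp
  rw [h4] at h3
  have h5 := bv_lt_mu G v
  omega

lemma seg_facts_h {v : V} {m : ℕ} {e : GridEdge} (he : e ∈ seg G v m)
    (hh : e.horiz = true) : m % 2 = 0 ∧ e.pt.2 = -((coord G v m : ℕ) : ℤ) := by
  rw [seg] at he
  split at he
  · exact ⟨by assumption, (mem_emitH.mp he).2.1⟩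
  · rw [mem_emitV.mp he |>.1] at hh
    exact absurd hh (by simp)

lemma seg_facts_v {v : V} {m : ℕ} {e : GridEdge} (he : e ∈ seg G v m)
    (hh : e.horiz = false) : ¬ m % 2 = 0 ∧ e.pt.1 = ((coord G v m : ℕ) : ℤ) := by
  rw [seg] at he
  split at he
  · rw [mem_emitH.mp he |>.1] at hh
    exact absurd hh (by simp)
  · exact ⟨by assumption, (mem_emitV.mp he).2.1⟩

lemma dl_cases (v : V) (m : ℕ) : dl G v m = 0 ∨ dl G v m = dd v := by
  rw [dl]; split
  · exact Or.inl rfl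
  · exact Or.inr rfl

lemma shared_clique {u w : V} {e : GridEdge} (hu : e ∈ pathEdges G u)
    (hw : e ∈ pathEdges G w) (hne : u ≠ w) :
    ∃ m, m < μ ∧ u ∈ clq G m ∧ w ∈ clq G m := by
  obtain ⟨m1, ha1, hb1, he1⟩ := (mem_pathEdges G).mp hu
  obtain ⟨m2, ha2, hb2, he2⟩ := (mem_pathEdges G).mp hw
  have hm1 : m1 < μ := lt_of_le_of_lt hb1 (bv_lt_mu G u)
  have hcc : coord G u m1 = coord G w m2 := by
    cases hhor : e.horiz with
    | false =>
      have f1 := seg_facts_v G he1 hhor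
      have f2 := seg_facts_v G he2 hhor
      have : ((coord G u m1 : ℕ) : ℤ) = ((coord G w m2 : ℕ) : ℤ) := by
        rw [← f1.2, ← f2.2]
      exact_mod_cast this
    | true =>
      have f1 := seg_facts_h G he1 hhor
      have f2 := seg_facts_h G he2 hhor
      have : -((coord G u m1 : ℕ) : ℤ) = -((coord G w m2 : ℕ) : ℤ) := by
        rw [← f1.2, ← f2.2]
      have h' : ((coord G u m1 : ℕ) : ℤ) = ((coord G w m2 : ℕ) : ℤ) := by omega
      exact_mod_cast h'
  obtain ⟨rfl, hdl⟩ := coord_inj G hcc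
  rcases dl_cases G u m1 with h0 | hdd
  · exact ⟨m1, hm1, (dl_eq_zero_iff G).mp h0, (dl_eq_zero_iff G).mp (by omega)⟩
  · exfalso
    have hup : dl G u m1 ≠ 0 := by have := dd_pos u; omega
    rcases dl_cases G w m1 with h0' | hdd'
    · omega
    · exact hne (dd_inj (by omega))

lemma adj_of_shared {u w : V} (hne : u ≠ w) {e : GridEdge}
    (hu : e ∈ pathEdges G u) (hw : e ∈ pathEdges G w) : G.Adj u w := by
  obtain ⟨m, hm, hu', hw'⟩ := shared_clique G hu hw hne
  exact (clq_mem G hm).1 hu' hw' hne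

lemma exists_common_clique {u w : V} (h : G.Adj u w) :
    ∃ m, m ∈ Sv G u ∧ m ∈ Sv G w := by
  have hcl : G.IsClique {u, w} := by
    rw [SimpleGraph.isClique_iff]
    exact Set.pairwise_pair.mpr (fun _ => ⟨h, h.symm⟩)
  obtain ⟨C, hC, hsub⟩ := exists_max_superset G hcl
  obtain ⟨m, hm, rfl⟩ := clq_surj G hC
  exact ⟨m, (mem_Sv G).mpr ⟨hm, hsub (by simp)⟩, (mem_Sv G).mpr ⟨hm, hsub (by simp)⟩⟩

lemma rep_pathOf : IsEPGRep G (pathOf G) := by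
  intro u w hne
  constructor
  · intro h
    obtain ⟨m, h1, h2⟩ := exists_common_clique G h
    exact ⟨EdG G m, Ed_mem_pathEdges G h1, Ed_mem_pathEdges G h2⟩
  · rintro ⟨e, he1, he2⟩
    exact adj_of_shared G hne he1 he2

lemma helly_pathOf : HellyEPG (pathOf G) := by
  intro T hT
  rcases T.eq_empty_or_nonempty with rfl | hTne
  · exact ⟨⟨(0, 0), true⟩, by simp⟩
  · have hcl : G.IsClique T := by
      intro x hx y hy hxy
      obtain ⟨e, he1, he2⟩ := hT x hx y hy
      exact adj_of_shared G hxy he1 he2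
    obtain ⟨C, hC, hsub⟩ := exists_max_superset G hcl
    obtain ⟨m, hm, rfl⟩ := clq_surj G hC
    exact ⟨EdG G m, fun i hi => Ed_mem_pathEdges G ((mem_Sv G).mpr ⟨hm, hsub hi⟩)⟩

lemma upper_mem :
    ∃ P : V → GridPath, IsEPGRep G P ∧ (∀ v : V, (P v).bends ≤ μ - 1) ∧ HellyEPG P :=
  ⟨pathOf G, rep_pathOf G,
    fun v => by have := bends_pathOf_le G v; omega, helly_pathOf G⟩

end Main3

end HB
namespace HB

lemma zip_tail_mem {l : List GridEdge} {k : ℕ} (hk : k + 1 < l.length) :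
    (l.get ⟨k, by omega⟩, l.get ⟨k + 1, hk⟩) ∈ l.zip l.tail := by
  have hlen : (l.zip l.tail).length = l.length - 1 := by
    rw [List.length_zip, List.length_tail]
    omega
  have hk' : k < (l.zip l.tail).length := by omega
  have h1 := List.getElem_mem (l := l.zip l.tail) hk'
  rw [List.getElem_zip] at h1
  simpa [List.getElem_tail] using h1

/-- If an edge of a path is not relevant, its geometric successor is also on the path. -/
lemma succ_mem_of_not_relevant {p : GridPath} {e : GridEdge}
    (he : e ∈ p.edges) (hnr : ¬ p.IsRelevant e) : succ e ∈ p.edges := by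
  obtain ⟨⟨iv, hlen⟩, hget⟩ := List.mem_iff_get.mp he
  set l := p.edges with hl
  have hi0 : iv ≠ 0 := by
    intro h0
    apply hnr
    left
    rw [List.head?_eq_getElem?, List.getElem?_eq_getElem (by omega : 0 < l.length)]
    rw [← hget]
    simp only [List.get_eq_getElem, Option.some.injEq]
    congr 1
    omega
  have hilast : iv + 1 ≠ l.length := by
    intro h0
    apply hnr
    right; left
    rw [List.getLast?_eq_getElem?, List.getElem?_eq_getElem
      (by omega : l.length - 1 < l.length)]
    rw [← hget]
    simp only [List.get_eq_getElem, Option.some.injEq]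
    congr 1
    omega
  have hi1 : iv + 1 < l.length := by omega
  have hip : iv - 1 + 1 = iv := by omega
  have hlpe : l.length = p.edges.length := rfl
  have hchain : ∀ i (h : i < l.length - 1), GridEdge.adj (l.get ⟨i, by omega⟩) (l.get ⟨i + 1, by omega⟩) :=
    fun i h => List.isChain_iff_getElem.mp p.chain i (by omega)
  have hadj1 : GridEdge.adj (l.get ⟨iv - 1, by omega⟩) e := by
    have h := hchain (iv - 1) (by omega)
    rw [show (⟨iv - 1 + 1, by omega⟩ : Fin l.length) = ⟨iv, hlen⟩ from Fin.ext hip] at h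
    rwa [hget] at h
  have hadj2 : GridEdge.adj e (l.get ⟨iv + 1, hi1⟩) := by
    have h := hchain iv (by omega)
    rwa [hget] at h
  have hph : (l.get ⟨iv - 1, by omega⟩).horiz = e.horiz := by
    by_contra hne
    apply hnr
    right; right
    refine ⟨(l.get ⟨iv - 1, by omega⟩, l.get ⟨iv, hlen⟩), ?_, ?_, Or.inr hget.symm⟩
    · have := zip_tail_mem (l := l) (k := iv - 1) (by omega)
      rwa [show (⟨iv - 1 + 1, by omega⟩ : Fin l.length) = ⟨iv, hlen⟩ from Fin.ext hip]
        at this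
    · rw [hget]; exact hne
  have hnh : e.horiz = (l.get ⟨iv + 1, hi1⟩).horiz := by
    by_contra hne
    apply hnr
    right; right
    refine ⟨(l.get ⟨iv, hlen⟩, l.get ⟨iv + 1, hi1⟩), zip_tail_mem hi1, ?_, Or.inl hget.symm⟩
    rw [hget]; exact hne
  rcases adj_same_dir hadj1 hph with h1 | h1
  · rcases adj_same_dir hadj2 hnh with h2 | h2
    · rw [← h2]; exact List.get_mem _ _
    · exfalso
      have hpn : l.get ⟨iv - 1, by omega⟩ = l.get ⟨iv + 1, hi1⟩ :=
        succ_inj (h1.symm.trans h2)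
      have := List.nodup_iff_injective_get.mp p.nodup hpn
      have := congrArg Fin.val this
      simp only at this
      omega
  · rw [← h1]; exact List.get_mem _ _

/-- The finite set of relevant edges of a path. -/
noncomputable def relFinset (p : GridPath) : Finset GridEdge :=
  p.edges.head?.toFinset ∪ p.edges.getLast?.toFinset ∪
    ((p.edges.zip p.edges.tail).filter fun q => q.1.horiz != q.2.horiz).toFinset.biUnion
      (fun q => {q.1, q.2})

lemma card_relFinset (p : GridPath) : (relFinset p).card ≤ 2 * (p.bends + 1) := by
  have h1 : (p.edges.head?.toFinset).card ≤ 1 := by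
    cases p.edges.head? <;> simp
  have h2 : (p.edges.getLast?.toFinset).card ≤ 1 := by
    cases p.edges.getLast? <;> simp
  have h3 : (((p.edges.zip p.edges.tail).filter fun q => q.1.horiz != q.2.horiz).toFinset.biUnion
      (fun q => {q.1, q.2})).card ≤ 2 * p.bends := by
    refine le_trans (Finset.card_biUnion_le) ?_
    refine le_trans (Finset.sum_le_card_nsmul _ _ 2 ?_) ?_
    · intro q _
      exact le_trans (Finset.card_insert_le _ _) (by simp)
    · have := List.toFinset_card_le
        ((p.edges.zip p.edges.tail).filter fun q => q.1.horiz != q.2.horiz)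
      rw [GridPath.bends]
      simp only [smul_eq_mul]
      omega
  calc (relFinset p).card
      ≤ (p.edges.head?.toFinset ∪ p.edges.getLast?.toFinset).card +
        (((p.edges.zip p.edges.tail).filter fun q => q.1.horiz != q.2.horiz).toFinset.biUnion
          (fun q => {q.1, q.2})).card := Finset.card_union_le _ _
    _ ≤ ((p.edges.head?.toFinset).card + (p.edges.getLast?.toFinset).card) +
        2 * p.bends := by
        have := Finset.card_union_le p.edges.head?.toFinset p.edges.getLast?.toFinset
        omega
    _ ≤ 2 * (p.bends + 1) := by omega

lemma mem_relFinset {p : GridPath} {e : GridEdge} (h : p.IsRelevant e) :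
    e ∈ relFinset p := by
  rw [relFinset]
  rcases h with h | h | ⟨q, hq, hne, he⟩
  · refine Finset.mem_union_left _ (Finset.mem_union_left _ ?_)
    rw [Option.mem_toFinset, h]
    rfl
  · refine Finset.mem_union_left _ (Finset.mem_union_right _ ?_)
    rw [Option.mem_toFinset, h]
    rfl
  · refine Finset.mem_union_right _ ?_
    rw [Finset.mem_biUnion]
    refine ⟨q, ?_, ?_⟩
    · rw [List.mem_toFinset, List.mem_filter]
      exact ⟨hq, by simpa using hne⟩
    · rcases he with rfl | rfl <;> simp

end HB
namespace HB

section Count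

variable {V : Type*} [Fintype V] (G : SimpleGraph V)

lemma clique_nonempty [Nonempty V] {C : Set V} (hC : C ∈ maxCliques G) : C.Nonempty := by
  by_contra h
  rw [Set.not_nonempty_iff_eq_empty] at h
  subst h
  have v := Classical.arbitrary V
  have h1 : G.IsClique {v} := G.isClique_singleton v
  have h2 := hC.2 {v} h1 (Set.empty_subset _)
  exact (Set.singleton_nonempty v).ne_empty h2.symm

lemma count_bound [Nonempty V] {P : V → GridPath} (hrep : IsEPGRep G P) {k : ℕ}
    (hb : ∀ v : V, (P v).bends ≤ k) (hH : HellyEPG P) :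
    (maxCliques G).ncard ≤ 2 * Fintype.card V * (k + 1) := by
  classical
  have key : ∀ C ∈ maxCliques G, ∃ e : GridEdge,
      (∀ v ∈ C, e ∈ (P v).edges) ∧ ∃ v : V, (P v).IsRelevant e := by
    intro C hC
    have hpair : ∀ i ∈ C, ∀ j ∈ C, (P i).Inter (P j) := by
      intro i hi j hj
      by_cases hij : i = j
      · subst hij
        obtain ⟨e, he⟩ := List.exists_mem_of_ne_nil _ (P i).nonempty
        exact ⟨e, he, he⟩
      · exact (hrep i j hij).mp (hC.1 hi hj hij)
    obtain ⟨v0, hv0⟩ := clique_nonempty G hC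
    have hfin : {e : GridEdge | ∀ v ∈ C, e ∈ (P v).edges}.Finite := by
      apply Set.Finite.subset (List.finite_toSet (P v0).edges)
      intro e he
      exact he v0 hv0
    have hne : {e : GridEdge | ∀ v ∈ C, e ∈ (P v).edges}.Nonempty := by
      obtain ⟨e, hee⟩ := hH C hpair
      exact ⟨e, hee⟩
    obtain ⟨e, heC, hemax⟩ := Set.Finite.exists_maximalFor
      (fun e : GridEdge => e.pt.1 + e.pt.2) _ hfin hne
    refine ⟨e, heC, ?_⟩
    by_contra hnorel
    push_neg at hnorel
    have hsucc : succ e ∈ {e : GridEdge | ∀ v ∈ C, e ∈ (P v).edges} := by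
      intro v hv
      exact succ_mem_of_not_relevant (heC v hv) (hnorel v)
    have hle : (fun e : GridEdge => e.pt.1 + e.pt.2) e ≤
        (fun e : GridEdge => e.pt.1 + e.pt.2) (succ e) := by
      obtain ⟨⟨x, y⟩, h⟩ := e
      cases h <;> simp [succ] <;> omega
    have hcontra := hemax hsucc hle
    obtain ⟨⟨x, y⟩, h⟩ := e
    cases h <;> simp [succ] at hcontra <;> omega
  choose F hF1 hF2 using key
  have hinj : ∀ C1 (h1 : C1 ∈ maxCliques G) C2 (h2 : C2 ∈ maxCliques G),
      F C1 h1 = F C2 h2 → C1 = C2 := by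
    intro C1 h1 C2 h2 heq
    have hcl : G.IsClique (C1 ∪ C2) := by
      intro x hx y hy hxy
      have hxe : F C1 h1 ∈ (P x).edges := by
        rcases hx with hx | hx
        · exact hF1 C1 h1 x hx
        · rw [heq]; exact hF1 C2 h2 x hx
      have hye : F C1 h1 ∈ (P y).edges := by
        rcases hy with hy | hy
        · exact hF1 C1 h1 y hy
        · rw [heq]; exact hF1 C2 h2 y hy
      exact (hrep x y hxy).mpr ⟨F C1 h1, hxe, hye⟩
    have e1 : C1 = C1 ∪ C2 := h1.2 _ hcl Set.subset_union_left
    have e2 : C2 = C1 ∪ C2 := h2.2 _ hcl Set.subset_union_right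
    exact e1.trans e2.symm
  set R : Finset GridEdge := Finset.univ.biUnion (fun v : V => relFinset (P v)) with hR
  have hmemR : ∀ C (hC : C ∈ maxCliques G), F C hC ∈ R := by
    intro C hC
    obtain ⟨v, hv⟩ := hF2 C hC
    exact Finset.mem_biUnion.mpr ⟨v, Finset.mem_univ v, mem_relFinset hv⟩
  have hcard : (maxCliques G).ncard ≤ R.card := by
    rw [← Nat.card_coe_set_eq, ← Nat.card_eq_finsetCard]
    apply Nat.card_le_card_of_injective
      (f := fun C : ↥(maxCliques G) => (⟨F C.1 C.2, hmemR C.1 C.2⟩ : ↥R))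
    intro C1 C2 hC
    apply Subtype.ext
    exact hinj C1.1 C1.2 C2.1 C2.2 (congrArg Subtype.val hC)
  have hcard2 : R.card ≤ Fintype.card V * (2 * (k + 1)) := by
    refine le_trans (Finset.card_biUnion_le) ?_
    refine le_trans (Finset.sum_le_card_nsmul _ _ (2 * (k + 1)) ?_) ?_
    · intro v _
      have h1 := card_relFinset (P v)
      have h2 := hb v
      omega
    · simp
  have : Fintype.card V * (2 * (k + 1)) = 2 * Fintype.card V * (k + 1) := by ring
  omega

end Count

end HB

/-- For a graph with `n` vertices and `μ` maximal cliques,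
`μ/(2n) - 1 ≤ b_H(G) ≤ μ - 1`. -/
theorem hellyBendNumber_bounds {V : Type*} [Fintype V] (G : SimpleGraph V) :
    ((maxCliques G).ncard : ℚ) / (2 * Fintype.card V) - 1 ≤ hellyBendNumber G ∧
    (hellyBendNumber G : ℚ) ≤ ((maxCliques G).ncard : ℚ) - 1 := by
  classical
  rcases isEmpty_or_nonempty V with hV | hV
  · -- the empty graph
    have hM : maxCliques G = {(∅ : Set V)} := by
      ext s
      simp only [maxCliques, Set.mem_setOf_eq, Set.mem_singleton_iff]
      constructor
      · intro _
        exact Set.eq_empty_of_isEmpty s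
      · rintro rfl
        refine ⟨by simp [SimpleGraph.isClique_iff], fun t _ _ => ?_⟩
        exact (Set.eq_empty_of_isEmpty t).symm
    have hzero : hellyBendNumber G = 0 := by
      rw [hellyBendNumber]
      apply Nat.sInf_eq_zero.mpr
      left
      refine ⟨fun v => isEmptyElim v, fun u v _ => isEmptyElim u, fun v => isEmptyElim v,
        fun T _ => ⟨⟨(0, 0), true⟩, fun i _ => isEmptyElim i⟩⟩
    have hcard : Fintype.card V = 0 := Fintype.card_eq_zero
    rw [hM, hzero, hcard, Set.ncard_singleton]
    norm_num
  · -- the nonempty case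
    have hμ1 : 1 ≤ (maxCliques G).ncard := by
      obtain ⟨C, hC, -⟩ :=
        HB.exists_max_superset G (G.isClique_singleton (Classical.arbitrary V))
      exact (Set.ncard_pos (Set.toFinite _)).mpr ⟨C, hC⟩
    have hub : hellyBendNumber G ≤ (maxCliques G).ncard - 1 :=
      Nat.sInf_le (HB.upper_mem G)
    have hSne : {k : ℕ | ∃ P : V → GridPath,
        IsEPGRep G P ∧ (∀ v : V, (P v).bends ≤ k) ∧ HellyEPG P}.Nonempty :=
      ⟨(maxCliques G).ncard - 1, HB.upper_mem G⟩
    obtain ⟨P, hrep, hb, hH⟩ := Nat.sInf_mem hSne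
    have hcount := HB.count_bound G hrep hb hH
    have hn : 0 < Fintype.card V := Fintype.card_pos
    constructor
    · rw [sub_le_iff_le_add, div_le_iff₀ (by positivity)]
      have hq : ((maxCliques G).ncard : ℚ) ≤
          ((2 * Fintype.card V * (hellyBendNumber G + 1) : ℕ) : ℚ) := by
        exact_mod_cast hcount
      push_cast at hq
      nlinarith [hq]
    · have h2 := (Nat.cast_le (α := ℚ)).mpr hub
      rw [Nat.cast_sub hμ1] at h2
      simpa using h2
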